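/- Let σ > 0, a ∈ ℝ, c ≥ 0, β ≥ 0, let ν be a Borel measure on (0,∞) with ∫₀^∞(1∧z)ν(dz) < ∞ and ∫₁^∞ log(1+z) ν(dz) < ∞, let g : [0,∞) → [0,∞) be a nondecreasing continuous function with g(0) = 0, and take b = a and μ(dz) = σ z^{−2} dz in the generator L (this corresponds to the stable branching mechanism Ψ(λ) = aλ + cλ² + σλ log λ). If liminf_{x→∞} g(x)/(x log x) > σ, then V_log(x) = log(1+x) is a Lyapunov function: there exist constants C₀ > 0 and C₁ > 0 such that LV_log(x) ≤ C₀ − C₁ log(1+x) for all x ≥ 0. -/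

import Mathlib

/-!
Write `u = 1 + x`. The diffusion term is nonpositive and the linear drift is bounded.
On `z ≤ 1` the compensated integrand against `μ(dz) = σ z⁻² dz` is nonpositive, and on
`z > 1` the integral of `log (1 + z/u) / z²` is exactly `log (1 + 1/u) + log (1 + u) / u`,
so the `μ`-term is at most `σ (log u + 1 + log 2)`. Since `log (1 + z/u) ≤ log (1 + z)` for
`u ≥ 1`, the two integrability conditions on `ν` bound the immigration term uniformly.
Altogether `LV_log(x) ≤ A + σ log u - g(x)/u` for a constant `A`. For `θ` strictly between
`σ` and the liminf, eventually `g(x) ≥ θ x log x ≥ θ u (log u - 1)`, which leaves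
`-(θ - σ) log u`.
-/

open MeasureTheory

/-- The Lévy measure `μ(dz) = σ z⁻² dz` on `(0,∞)`, corresponding to the stable
branching mechanism `Ψ(λ) = aλ + cλ² + σλ log λ` (`α = 1`, with `b = a`). -/
noncomputable def muNeveu (σ : ℝ) : Measure ℝ :=
  (volume.restrict (Set.Ioi (0 : ℝ))).withDensity (fun z => ENNReal.ofReal (σ / z ^ 2))

open Set Filter Real
open scoped Topology

-- A nonintegrable `f` has Bochner integral `0 ≤ ∫ g`.
lemma integral_le_of_ae_le_of_nonneg {α : Type*} [MeasurableSpace α] {μ : Measure α}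
    {f g : α → ℝ} (hg : Integrable g μ) (hg₀ : 0 ≤ᵐ[μ] g) (hfg : f ≤ᵐ[μ] g) :
    ∫ a, f a ∂μ ≤ ∫ a, g a ∂μ := by
  by_cases hf : Integrable f μ
  · exact integral_mono_ae hf hg hfg
  · exact integral_undef hf ▸ integral_nonneg_of_ae hg₀

lemma hasDerivAt_antideriv_log_one_add_div_div_sq {u z : ℝ} (hu : 0 < u) (hz : 0 < z) :
    HasDerivAt (fun y => -(log (1 + u / y) / u + log (1 + y / u) / y))
      (log (1 + z / u) / z ^ 2) z := by
  have h₁ : HasDerivAt (fun y => log (1 + u / y)) ((-(u / z ^ 2)) / (1 + u / z)) z :=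
    (((hasDerivAt_inv hz.ne').const_mul u).const_add 1).log (by positivity) |>.congr_deriv
      (by field_simp)
  have h₂ : HasDerivAt (fun y => log (1 + y / u)) ((1 / u) / (1 + z / u)) z :=
    ((hasDerivAt_id z).div_const u).const_add 1 |>.log (by positivity)
  refine ((h₁.div_const u).add (h₂.div (hasDerivAt_id' z) hz.ne')).neg.congr_deriv ?_
  field_simp
  ring

lemma tendsto_log_one_add_div_div_atTop {u : ℝ} (hu : 0 < u) :
    Tendsto (fun z => log (1 + z / u) / z) atTop (𝓝 0) := by
  have hw : Tendsto (fun z => 1 + z / u) atTop atTop :=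
    tendsto_atTop_add_const_left _ _ (tendsto_id.atTop_div_const hu)
  have hratio : Tendsto (fun z => (1 + z / u) / z) atTop (𝓝 (0 + 1 / u)) := by
    refine ((tendsto_const_nhds (x := (1 : ℝ))).div_atTop tendsto_id).add
      (tendsto_const_nhds (x := 1 / u)) |>.congr' ?_
    filter_upwards [eventually_ne_atTop 0] with z hz
    simp only [id]
    field_simp
  have := ((isLittleO_log_id_atTop.tendsto_div_nhds_zero.comp hw).mul hratio)
  rw [zero_mul] at this
  refine this.congr' ?_
  filter_upwards [eventually_gt_atTop 0] with z hz
  simp only [Function.comp_apply, id]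
  field_simp

lemma integral_Ioi_one_log_one_add_div_div_sq {u : ℝ} (hu : 0 < u) :
    IntegrableOn (fun z => log (1 + z / u) / z ^ 2) (Ioi 1) ∧
      ∫ z in Ioi 1, log (1 + z / u) / z ^ 2 = log (1 + 1 / u) + log (1 + u) / u := by
  have hderiv : ∀ z ∈ Ici (1 : ℝ),
      HasDerivAt (fun y => -(log (1 + u / y) / u + log (1 + y / u) / y))
        (log (1 + z / u) / z ^ 2) z :=
    fun z hz => hasDerivAt_antideriv_log_one_add_div_div_sq hu (zero_lt_one.trans_le hz)
  have hnonneg : ∀ z ∈ Ioi (1 : ℝ), 0 ≤ log (1 + z / u) / z ^ 2 := fun z hz =>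
    div_nonneg (log_nonneg (by linarith [div_pos (zero_lt_one.trans hz) hu])) (sq_nonneg z)
  have hlim : Tendsto (fun y => -(log (1 + u / y) / u + log (1 + y / u) / y)) atTop (𝓝 0) := by
    have h₁ : Tendsto (fun y => log (1 + u / y)) atTop (𝓝 0) := by
      simpa using ((tendsto_const_nhds (x := u)).div_atTop tendsto_id |>.const_add 1).log (by simp)
    simpa using ((h₁.div_const u).add (tendsto_log_one_add_div_div_atTop hu)).neg
  refine ⟨integrableOn_Ioi_deriv_of_nonneg' hderiv hnonneg hlim, ?_⟩
  rw [integral_Ioi_of_hasDerivAt_of_nonneg' hderiv hnonneg hlim]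
  simp only [div_one]
  ring

lemma setIntegral_Ioi_muNeveu {σ : ℝ} (hσ : 0 ≤ σ) (f : ℝ → ℝ) :
    ∫ z in Ioi 0, f z ∂muNeveu σ = ∫ z in Ioi 0, σ / z ^ 2 * f z := by
  rw [muNeveu, setIntegral_withDensity_eq_setIntegral_toReal_smul (by fun_prop)
    (ae_of_all _ fun _ => ENNReal.ofReal_lt_top) _ measurableSet_Ioi,
    Measure.restrict_restrict measurableSet_Ioi, inter_self]
  refine setIntegral_congr_fun measurableSet_Ioi fun z _ => ?_
  rw [ENNReal.toReal_ofReal (by positivity), smul_eq_mul]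

lemma setIntegral_muNeveu_log_one_add_div_sub_le {σ u : ℝ} (hσ : 0 ≤ σ) (hu : 1 ≤ u) :
    ∫ z in Ioi 0, (log (1 + z / u) - z / u * (if z ≤ 1 then 1 else 0)) ∂muNeveu σ ≤
      σ * (1 + log 2 + log u) / u := by
  have hu₀ : 0 < u := zero_lt_one.trans_le hu
  obtain ⟨hint, hval⟩ := integral_Ioi_one_log_one_add_div_div_sq hu₀
  set h : ℝ → ℝ := (Ioi 1).indicator fun z => σ * (log (1 + z / u) / z ^ 2)
  have hle : ∀ z ∈ Ioi (0 : ℝ),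
      σ / z ^ 2 * (log (1 + z / u) - z / u * (if z ≤ 1 then 1 else 0)) ≤ h z := by
    intro z (hz : 0 < z)
    simp only [h]
    have hlog : log (1 + z / u) ≤ z / u :=
      (log_le_sub_one_of_pos (by positivity)).trans_eq (by ring)
    by_cases hz₁ : z ≤ 1
    · rw [indicator_of_notMem (s := Ioi 1) (not_lt.2 hz₁), if_pos hz₁]
      exact mul_nonpos_of_nonneg_of_nonpos (by positivity) (by linarith)
    · rw [indicator_of_mem (s := Ioi 1) (not_le.1 hz₁), if_neg hz₁]
      apply le_of_eq; ring
  have hlog : log (1 + u) ≤ log 2 + log u := by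
    rw [← log_mul two_ne_zero hu₀.ne']
    exact log_le_log (by positivity) (by linarith)
  calc _ = ∫ z in Ioi 0, σ / z ^ 2 * (log (1 + z / u) - z / u * (if z ≤ 1 then 1 else 0)) :=
        setIntegral_Ioi_muNeveu hσ _
    _ ≤ ∫ z in Ioi 0, h z := by
        refine integral_le_of_ae_le_of_nonneg ?_ ?_
          ((ae_restrict_iff' measurableSet_Ioi).2 (ae_of_all _ hle))
        · exact (IntegrableOn.integrable_indicator (hint.const_mul σ)
            measurableSet_Ioi).integrableOn
        · refine ae_of_all _ (indicator_nonneg fun z (hz : 1 < z) => ?_)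
          have : 0 ≤ log (1 + z / u) :=
            log_nonneg (by linarith [div_pos (zero_lt_one.trans hz) hu₀])
          positivity
    _ = σ * (log (1 + 1 / u) + log (1 + u) / u) := by
        rw [integral_indicator measurableSet_Ioi, Measure.restrict_restrict measurableSet_Ioi,
          inter_eq_left.2 (Ioi_subset_Ioi zero_le_one), integral_const_mul, hval]
    _ ≤ σ * (1 / u + (log 2 + log u) / u) := by
        gcongr
        · exact (log_le_sub_one_of_pos (by positivity)).trans_eq (by ring)
    _ = σ * (1 + log 2 + log u) / u := by ring

lemma mul_setIntegral_muNeveu_log_one_add_div_sub_le {σ x : ℝ} (hσ : 0 ≤ σ) (hx : 0 ≤ x) :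
    x * ∫ z in Ioi 0, (log (1 + z / (1 + x)) - z / (1 + x) * (if z ≤ 1 then 1 else 0))
      ∂muNeveu σ ≤ σ * (1 + log 2 + log (1 + x)) := by
  have hB : 0 ≤ σ * (1 + log 2 + log (1 + x)) := by
    have := log_nonneg (show 1 ≤ 1 + x by linarith)
    have := log_pos one_lt_two
    positivity
  calc _ ≤ x * (σ * (1 + log 2 + log (1 + x)) / (1 + x)) :=
        mul_le_mul_of_nonneg_left (setIntegral_muNeveu_log_one_add_div_sub_le hσ (by linarith)) hx
    _ ≤ σ * (1 + log 2 + log (1 + x)) := by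
        rw [mul_div_left_comm]
        exact mul_le_of_le_one_right hB ((div_le_one (by linarith)).2 (by linarith))

lemma exists_forall_setIntegral_log_one_add_div_le {ν : Measure ℝ}
    (hνloc : ∫⁻ z, ENNReal.ofReal (min 1 z) ∂ν < ⊤)
    (hνlog : ∫⁻ z in Ioi 1, ENNReal.ofReal (log (1 + z)) ∂ν < ⊤) :
    ∃ K ≥ 0, ∀ u, 1 ≤ u → ∫ z in Ioi 0, log (1 + z / u) ∂ν ≤ K := by
  set Λ := ∫⁻ z, ENNReal.ofReal (min 1 z) ∂ν + ∫⁻ z in Ioi 1, ENNReal.ofReal (log (1 + z)) ∂ν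
  refine ⟨Λ.toReal, ENNReal.toReal_nonneg, fun u hu => ?_⟩
  have hpt : ∀ z ∈ Ioi (0 : ℝ), ENNReal.ofReal ‖log (1 + z / u)‖ ≤
      ENNReal.ofReal (min 1 z) + (Ioi 1).indicator (fun z => ENNReal.ofReal (log (1 + z))) z := by
    intro z (hz : 0 < z)
    have hmono : log (1 + z / u) ≤ log (1 + z) :=
      log_le_log (by positivity) (by linarith [div_le_self hz.le hu])
    rw [Real.norm_of_nonneg (log_nonneg (by linarith [div_pos hz (zero_lt_one.trans_le hu)]))]
    by_cases hz₁ : z ≤ 1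
    · refine le_add_right (ENNReal.ofReal_le_ofReal ?_)
      rw [min_eq_right hz₁]
      linarith [log_le_sub_one_of_pos (show 0 < 1 + z by linarith)]
    · rw [indicator_of_mem (s := Ioi 1) (not_le.1 hz₁)]
      exact le_add_left (ENNReal.ofReal_le_ofReal hmono)
  have hlint : ∫⁻ z in Ioi 0, ENNReal.ofReal ‖log (1 + z / u)‖ ∂ν ≤ Λ :=
    calc _ ≤ ∫⁻ z in Ioi 0, (ENNReal.ofReal (min 1 z) +
          (Ioi 1).indicator (fun z => ENNReal.ofReal (log (1 + z))) z) ∂ν :=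
          setLIntegral_mono (by measurability) hpt
      _ ≤ _ := setLIntegral_le_lintegral _ _
      _ = Λ := by
          rw [lintegral_add_left (by fun_prop), lintegral_indicator measurableSet_Ioi]
  calc _ ≤ ‖∫ z in Ioi 0, log (1 + z / u) ∂ν‖ := le_norm_self _
    _ ≤ _ := norm_integral_le_lintegral_norm _
    _ ≤ Λ.toReal := ENNReal.toReal_mono (ENNReal.add_lt_top.2 ⟨hνloc, hνlog⟩).ne hlint

lemma one_add_mul_log_one_add_sub_one_le {x : ℝ} (hx : 0 ≤ x) :
    (1 + x) * (log (1 + x) - 1) ≤ x * log x := by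
  rcases hx.eq_or_lt with rfl | hx₀
  · simp
  have hratio : log (1 + x) - log x ≤ 1 / x := by
    rw [← log_div (by positivity) hx₀.ne']
    refine (log_le_sub_one_of_pos (by positivity)).trans_eq ?_
    field_simp
    ring
  have hlog : log (1 + x) ≤ x := by linarith [log_le_sub_one_of_pos (show 0 < 1 + x by linarith)]
  have := mul_le_mul_of_nonneg_left hratio hx
  rw [mul_one_div_cancel hx₀.ne'] at this
  nlinarith

lemma exists_lt_eventually_mul_log_one_add_sub_one_le_div {σ : ℝ} (hσ : 0 ≤ σ) {g : ℝ → ℝ}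
    (h : (σ : EReal) < liminf (fun x : ℝ => ((g x / (x * log x) : ℝ) : EReal)) atTop) :
    ∃ θ, σ < θ ∧ ∀ᶠ x in atTop, θ * (log (1 + x) - 1) ≤ g x / (1 + x) := by
  obtain ⟨θ, hσθ, hθ⟩ := EReal.lt_iff_exists_real_btwn.1 h
  have hσθ : σ < θ := EReal.coe_lt_coe_iff.1 hσθ
  refine ⟨θ, hσθ, ?_⟩
  filter_upwards [eventually_lt_of_lt_liminf hθ, eventually_gt_atTop 1] with x hx hx₁
  have hgx : θ * (x * log x) < g x :=
    (lt_div_iff₀ (mul_pos (by linarith) (log_pos hx₁))).1 (EReal.coe_lt_coe_iff.1 hx)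
  rw [le_div_iff₀ (by linarith)]
  calc θ * (log (1 + x) - 1) * (1 + x) = θ * ((1 + x) * (log (1 + x) - 1)) := by ring
    _ ≤ θ * (x * log x) :=
        mul_le_mul_of_nonneg_left (one_add_mul_log_one_add_sub_one_le (by linarith)) (by linarith)
    _ ≤ g x := hgx.le

lemma mul_log_one_add_sub_le {θ G M x : ℝ} (hθ : 0 ≤ θ) (hM : 0 ≤ M) (hx : 0 ≤ x) (hG : 0 ≤ G)
    (hMG : M ≤ x → θ * (log (1 + x) - 1) ≤ G) :
    θ * log (1 + x) - G ≤ θ * (1 + log (1 + M)) := by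
  have hlogM : 0 ≤ θ * log (1 + M) := mul_nonneg hθ (log_nonneg (by linarith))
  by_cases hxM : M ≤ x
  · linarith [hMG hxM]
  · have : θ * log (1 + x) ≤ θ * log (1 + M) := by gcongr; linarith
    linarith

lemma sub_mul_sub_div_one_add_le {β a G x : ℝ} (hβ : 0 ≤ β) (hx : 0 ≤ x) :
    (β - a * x - G) / (1 + x) ≤ β + |a| - G / (1 + x) := by
  rw [sub_div, sub_le_sub_iff_right, div_le_iff₀ (by linarith)]
  nlinarith [abs_nonneg a, mul_le_mul_of_nonneg_right (neg_abs_le a) hx]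

theorem lyapunov_Vlog_neveu_general
    (σ a c β : ℝ) (hσ : 0 < σ) (hc : 0 ≤ c) (hβ : 0 ≤ β)
    (ν : Measure ℝ)
    (hνloc : ∫⁻ z, ENNReal.ofReal (min 1 z) ∂ν < ⊤)
    (hνlog : ∫⁻ z in Set.Ioi (1 : ℝ), ENNReal.ofReal (Real.log (1 + z)) ∂ν < ⊤)
    (g : ℝ → ℝ) (hgnonneg : ∀ x ∈ Set.Ici (0 : ℝ), 0 ≤ g x)
    (hliminf : (σ : EReal) < Filter.liminf
      (fun x : ℝ => ((g x / (x * Real.log x) : ℝ) : EReal)) Filter.atTop) :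
    ∃ C₀ > (0 : ℝ), ∃ C₁ > (0 : ℝ), ∀ x : ℝ, 0 ≤ x →
      -c / (1 + x) ^ 2
          + x * (∫ z in Set.Ioi (0 : ℝ),
              (Real.log (1 + z / (1 + x))
                - (z / (1 + x)) * (if z ≤ 1 then 1 else 0)) ∂(muNeveu σ))
          + (β - a * x - g x) / (1 + x)
          + (∫ z in Set.Ioi (0 : ℝ), Real.log (1 + z / (1 + x)) ∂ν)
        ≤ C₀ - C₁ * Real.log (1 + x) := by
  obtain ⟨K, hK₀, hK⟩ := exists_forall_setIntegral_log_one_add_div_le hνloc hνlog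
  obtain ⟨θ, hσθ, hθg⟩ := exists_lt_eventually_mul_log_one_add_sub_one_le_div hσ.le hliminf
  obtain ⟨M, hM⟩ := eventually_atTop.1 hθg
  have hθ : 0 < θ := hσ.trans hσθ
  have hA : 0 < σ * (1 + log 2) + β + |a| + K := by
    have := mul_pos hσ (show 0 < 1 + log 2 by linarith [log_pos one_lt_two])
    linarith [abs_nonneg a]
  refine ⟨σ * (1 + log 2) + β + |a| + K + θ * (1 + log (1 + max M 0)),
    by nlinarith [log_nonneg (show 1 ≤ 1 + max M 0 by linarith [le_max_right M 0])],
    θ - σ, sub_pos.2 hσθ, fun x hx => ?_⟩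
  have hdiffusion : -c / (1 + x) ^ 2 ≤ 0 :=
    div_nonpos_of_nonpos_of_nonneg (neg_nonpos.2 hc) (sq_nonneg _)
  have hgrowth := mul_log_one_add_sub_le hθ.le (le_max_right M 0) hx
    (div_nonneg (hgnonneg x hx) (by linarith))
    fun hMx => hM x (le_of_max_le_left hMx)
  linarith [mul_setIntegral_muNeveu_log_one_add_div_sub_le hσ.le hx, hK (1 + x) (by linarith),
    sub_mul_sub_div_one_add_le (a := a) (G := g x) hβ hx]

theorem lyapunov_Vlog_neveu
    (σ a c β : ℝ) (hσ : 0 < σ) (hc : 0 ≤ c) (hβ : 0 ≤ β)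
    (ν : Measure ℝ) (hνsupp : ν (Set.Iic 0) = 0)
    (hνloc : ∫⁻ z, ENNReal.ofReal (min 1 z) ∂ν < ⊤)
    (hνlog : ∫⁻ z in Set.Ioi (1 : ℝ), ENNReal.ofReal (Real.log (1 + z)) ∂ν < ⊤)
    (g : ℝ → ℝ) (hg0 : g 0 = 0) (hgmono : MonotoneOn g (Set.Ici 0))
    (hgcont : ContinuousOn g (Set.Ici 0)) (hgnonneg : ∀ x ∈ Set.Ici (0 : ℝ), 0 ≤ g x)
    (hliminf : (σ : EReal) < Filter.liminf
      (fun x : ℝ => ((g x / (x * Real.log x) : ℝ) : EReal)) Filter.atTop) :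
    ∃ C₀ > (0 : ℝ), ∃ C₁ > (0 : ℝ), ∀ x : ℝ, 0 ≤ x →
      -c / (1 + x) ^ 2
          + x * (∫ z in Set.Ioi (0 : ℝ),
              (Real.log (1 + z / (1 + x))
                - (z / (1 + x)) * (if z ≤ 1 then 1 else 0)) ∂(muNeveu σ))
          + (β - a * x - g x) / (1 + x)
          + (∫ z in Set.Ioi (0 : ℝ), Real.log (1 + z / (1 + x)) ∂ν)
        ≤ C₀ - C₁ * Real.log (1 + x) :=
  lyapunov_Vlog_neveu_general σ a c β hσ hc hβ ν hνloc hνlog g hgnonneg hliminf
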